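/- arXiv:1307.6125 — 4 statements merged into one kernel-verified Lean document; each statement's English description precedes it below -/
import Mathlib

section
/- Consider a system of m polynomial equations in n complex variables of the form alpha_i * f_i(x) + g_i(x) = 0 together with the inequations f_i(x) != 0, for i = 1,...,m, where f_i, g_i are fixed polynomials and alpha = (alpha_1,...,alpha_m) is a parameter vector. If the set of parameters alpha in C^m for which the system has a solution x in C^n has positive Lebesgue measure (equivalently, is not contained in the zero set of any nonzero polynomial), then m <= n. -/
/-!
At a solution `x` we have `α i = -g i (x) / f i (x)`. The ratios `-g i / f i` live in the
localization of `K[X_1, …, X_n]` at the `f i`, an algebra of transcendence degree `n`, so when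
`m > n` they satisfy a nonzero polynomial relation `Q`. Since every `f i (x) ≠ 0`, evaluation at
`x` extends to that localization and carries the relation to `Q(α) = 0`.
-/

open MvPolynomial Algebra

universe u v w

theorem IsLocalization.trdeg_eq {R : Type u} {S A : Type v} [CommRing R] [CommRing S]
    [IsDomain S] [CommRing A] [Algebra R S] [Algebra S A] [Algebra R A] [IsScalarTower R S A]
    [FaithfulSMul R S] (M : Submonoid S) (hM : M ≤ nonZeroDivisors S) [IsLocalization M A] :
    trdeg R A = trdeg R S := by
  have : Nontrivial R := (algebraMap R S).domain_nontrivial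
  have : IsDomain A := isDomain_of_le_nonZeroDivisors A hM
  have : FaithfulSMul S A :=
    (faithfulSMul_iff_algebraMap_injective S A).mpr (IsLocalization.injective A hM)
  have := IsLocalization.isAlgebraic A M
  rw [← trdeg_add_eq R S (A := A), trdeg_eq_zero (R := S) (A := A), add_zero]

theorem MvPolynomial.card_le_of_algebraicIndependent_localization {K : Type u} {σ : Type v}
    {ι : Type w} {A : Type (max u v)} [CommRing K] [IsDomain K] [Fintype σ] [Fintype ι]
    [CommRing A] [Algebra (MvPolynomial σ K) A] [Algebra K A]
    [IsScalarTower K (MvPolynomial σ K) A] (M : Submonoid (MvPolynomial σ K))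
    (hM : M ≤ nonZeroDivisors _) [IsLocalization M A] {x : ι → A}
    (hx : AlgebraicIndependent K x) : Fintype.card ι ≤ Fintype.card σ := by
  have := hx.lift_cardinalMk_le_trdeg
  rw [IsLocalization.trdeg_eq M hM, MvPolynomial.trdeg_of_isDomain] at this
  simpa using this

variable {K : Type u} {σ : Type v} {ι : Type w} [Field K]

def solvableParameters (f g : ι → MvPolynomial σ K) : Set (ι → K) :=
  {α | ∃ x : σ → K, ∀ i, α i * eval x (f i) + eval x (g i) = 0 ∧ eval x (f i) ≠ 0}

theorem exists_ne_zero_eval_eq_zero_of_mem_solvableParameters [Fintype σ] [Fintype ι]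
    (hcard : Fintype.card σ < Fintype.card ι) {f : ι → MvPolynomial σ K} (hf : ∀ i, f i ≠ 0)
    (g : ι → MvPolynomial σ K) :
    ∃ Q : MvPolynomial ι K, Q ≠ 0 ∧ ∀ α ∈ solvableParameters f g, eval α Q = 0 := by
  let M := Submonoid.closure (Set.range f)
  have hM : M ≤ nonZeroDivisors _ := Submonoid.closure_le.mpr <|
    Set.range_subset_iff.mpr fun i => mem_nonZeroDivisors_of_ne_zero (hf i)
  let ratio (i : ι) : Localization M :=
    IsLocalization.mk' _ (-g i) (⟨f i, Submonoid.subset_closure ⟨i, rfl⟩⟩ : M)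
  obtain ⟨Q, hQ, hQ0⟩ : ∃ Q, aeval ratio Q = 0 ∧ Q ≠ 0 := by
    by_contra! hindep
    exact hcard.not_ge <| card_le_of_algebraicIndependent_localization M hM
      (algebraicIndependent_iff.mpr hindep)
  refine ⟨Q, hQ0, fun α ⟨x, hx⟩ => ?_⟩
  have hunit : M ≤ (IsUnit.submonoid K).comap (eval x).toMonoidHom :=
    Submonoid.closure_le.mpr <| Set.range_subset_iff.mpr fun i =>
      (IsUnit.mem_submonoid_iff _).mpr (hx i).2.isUnit
  let φ := IsLocalization.liftAlgHom (S := Localization M) (f := aeval x) fun y =>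
    (IsUnit.mem_submonoid_iff _).mp (hunit y.2)
  have hφ : (fun i => φ (ratio i)) = α := funext fun i => by
    rw [IsLocalization.coe_liftAlgHom, IsLocalization.lift_mk'_spec]
    change eval x (-g i) = eval x (f i) * α i
    rw [map_neg]
    linear_combination -(hx i).1
  rw [← aeval_eq_eval, ← hφ, ← comp_aeval_apply, hQ, map_zero]

/-- If, for a set of parameters `α ∈ ℂ^m` not contained in the zero set of any
nonzero polynomial (equivalently, of positive measure), the hybrid system
`α i * f i (x) + g i (x) = 0`, `f i (x) ≠ 0` (`i = 1,…,m`) has a solution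
`x ∈ ℂ^n`, then `m ≤ n`. -/
theorem stmt_1 (m n : ℕ) (f g : Fin m → MvPolynomial (Fin n) ℂ)
    (h : ∀ Q : MvPolynomial (Fin m) ℂ, Q ≠ 0 →
      ∃ α : Fin m → ℂ, MvPolynomial.eval α Q ≠ 0 ∧
        ∃ x : Fin n → ℂ, ∀ i,
          α i * MvPolynomial.eval x (f i) + MvPolynomial.eval x (g i) = 0 ∧
          MvPolynomial.eval x (f i) ≠ 0) :
    m ≤ n := by
  by_contra! hmn
  have hf : ∀ i, f i ≠ 0 := fun i hfi => by
    obtain ⟨_, _, x, hx⟩ := h 1 one_ne_zero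
    exact (hx i).2 (by rw [hfi, map_zero])
  obtain ⟨Q, hQ0, hQ⟩ := exists_ne_zero_eval_eq_zero_of_mem_solvableParameters
    (by simpa using hmn) hf g
  obtain ⟨α, hα, hsol⟩ := h Q hQ0
  exact hα (hQ α hsol)
end

section
/- For the constant MIMO interference channel in the single beam case: if for a positive measure (equivalently, generic) set of channel matrices H_{kj} in C^{M_r x M_t} (1 <= k, j <= K) there exist nonzero vectors u_k in C^{M_r} and v_k in C^{M_t} satisfying u_k^H H_{kj} v_j = 0 for all k != j, then K(K-1) <= K(M_r + M_t - 2), i.e., K <= M_r + M_t - 1. -/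
/-!
After rescaling, every `u k` and `v j` has a pivot entry equal to `1`. The zero-forcing equation
for a pair `k ≠ j` then expresses the channel entry `H k j (a k) (b j)` at the two pivots as a
polynomial in the remaining channel entries and the `K (Mr - 1) + K (Mt - 1)` free beamformer
entries. When the `K² Mr Mt` channel entries are algebraically independent, a transcendence degree
count therefore gives `K (K - 1) ≤ K (Mr + Mt - 2)`.

Genericity is turned into algebraic independence by an ultrapower. The sets of solvable channels
with `Q ≠ 0` are nonempty and directed (multiply the polynomials), so one ultrafilter `U` contains
all of them. In the field `Germ U ℂ` the coordinates of the channel are then algebraically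
independent, and beamformers chosen channel by channel become a zero-forcing solution.
-/

open MvPolynomial Function Set Filter Matrix

theorem AlgebraicIndependent.natCard_le_ncard_of_forall_mem_adjoin {R A σ : Type*} [CommRing R]
    [IsDomain R] [CommRing A] [Algebra R A] [Finite σ] {x : σ → A}
    (hx : AlgebraicIndependent R x) {s : Set A} (hs : s.Finite)
    (hxs : ∀ i, x i ∈ Algebra.adjoin R s) : Nat.card σ ≤ s.ncard := by
  have hpre : ∀ i, ∃ q : MvPolynomial s R, aeval Subtype.val q = x i := by
    simpa only [Algebra.adjoin_eq_range, AlgHom.mem_range] using hxs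
  choose q hq using hpre
  have hq : AlgebraicIndependent R q :=
    .of_comp (aeval Subtype.val) (by convert hx; exact funext hq)
  have hcard := hq.lift_cardinalMk_le_trdeg
  rw [trdeg_of_isDomain, Cardinal.lift_lift] at hcard
  have := hs.to_subtype
  have hnat := Cardinal.toNat_le_toNat hcard
    (Cardinal.lift_lt_aleph0.2 (Cardinal.lt_aleph0_of_finite s))
  rwa [Cardinal.toNat_lift, Cardinal.toNat_lift] at hnat

theorem AlgebraicIndependent.natCard_le_of_mem_adjoin_compl_range {R A σ κ τ : Type*}
    [CommRing R] [IsDomain R] [CommRing A] [Algebra R A] [Finite σ] [Finite τ] {x : σ → A}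
    (hx : AlgebraicIndependent R x) {e : κ → σ} (he : Injective e) (y : τ → A)
    (hmem : ∀ c, x (e c) ∈ Algebra.adjoin R (x '' (range e)ᶜ ∪ range y)) :
    Nat.card κ ≤ Nat.card τ := by
  have hall : ∀ i, x i ∈ Algebra.adjoin R (x '' (range e)ᶜ ∪ range y) := by
    intro i
    by_cases hi : i ∈ range e
    · obtain ⟨c, rfl⟩ := hi
      exact hmem c
    · exact Algebra.subset_adjoin (Or.inl ⟨i, hi, rfl⟩)
  have hcard := hx.natCard_le_ncard_of_forall_mem_adjoin (toFinite _) hall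
  have hunion : (x '' (range e)ᶜ ∪ range y).ncard ≤ (range e)ᶜ.ncard + Nat.card τ :=
    (ncard_union_le _ _).trans (add_le_add (ncard_image_le (toFinite _))
      (by rw [← image_univ, ← ncard_univ]; exact ncard_image_le (toFinite _)))
  have hcompl : (range e)ᶜ.ncard + Nat.card κ = Nat.card σ := by
    rw [← ncard_range_of_injective he, ncard_compl_add_ncard]
  omega

theorem Nat.card_subtype_snd_ne_add {α β : Type*} [Finite α] [Finite β] (f : α → β) :
    Nat.card {q : α × β // q.2 ≠ f q.1} + Nat.card α = Nat.card α * Nat.card β := by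
  have hgraph : {q : α × β | q.2 = f q.1}.ncard = Nat.card α := by
    rw [← ncard_range_of_injective (f := fun a => (a, f a)) fun _ _ h => congrArg Prod.fst h]
    congr
    ext ⟨a, b⟩
    simp [eq_comm]
  rw [← Nat.card_prod, ← hgraph]
  exact ncard_compl_add_ncard _

theorem Matrix.mem_of_dotProduct_mulVec_eq_zero {A m n : Type*} [CommRing A] [Fintype m]
    [Fintype n] {S : Subring A} {M : Matrix m n A} {u : m → A} {v : n → A} {a : m} {b : n}
    (hua : u a = 1) (hvb : v b = 1) (hu : ∀ i, u i ∈ S) (hv : ∀ j, v j ∈ S)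
    (hM : ∀ i j, (i, j) ≠ (a, b) → M i j ∈ S) (h : u ⬝ᵥ M *ᵥ v = 0) : M a b ∈ S := by
  classical
  have hsum : u ⬝ᵥ M *ᵥ v = ∑ p : m × n, u p.1 * M p.1 p.2 * v p.2 := by
    simp only [dotProduct, mulVec, Finset.mul_sum, Fintype.sum_prod_type, mul_assoc]
  rw [hsum, ← Finset.add_sum_erase _ _ (Finset.mem_univ (a, b)), hua, hvb, one_mul,
    mul_one] at h
  rw [eq_neg_of_add_eq_zero_left h]
  exact neg_mem <| Subring.sum_mem _ fun p hp =>
    mul_mem (mul_mem (hu _) (hM _ _ (Finset.ne_of_mem_erase hp))) (hv _)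

section ZeroForcing

variable {R ι m n : Type*}

/-- Over `ℂ` the receive filter `u i` stands for the conjugate `star uᵢ` of the paper's `uᵢ`. -/
structure IsZeroForcing [NonUnitalNonAssocSemiring R] [Fintype m] [Fintype n]
    (H : ι → ι → Matrix m n R) (u : ι → m → R) (v : ι → n → R) : Prop where
  ne_zero_left : ∀ i, u i ≠ 0
  ne_zero_right : ∀ j, v j ≠ 0
  dotProduct_mulVec_eq_zero : ∀ i j, i ≠ j → u i ⬝ᵥ H i j *ᵥ v j = 0

def channelEntries (H : ι → ι → Matrix m n R) (p : ι × ι × m × n) : R :=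
  H p.1 p.2.1 p.2.2.1 p.2.2.2

variable {k F : Type*} [CommRing k] [IsDomain k] [Field F] [Algebra k F]
  [Fintype ι] [Fintype m] [Fintype n] {H : ι → ι → Matrix m n F}

theorem natCard_offDiag_le_of_dotProduct_mulVec_eq_zero
    (hH : AlgebraicIndependent k (channelEntries H)) {u : ι → m → F} {v : ι → n → F}
    {a : ι → m} {b : ι → n} (hua : ∀ i, u i (a i) = 1) (hvb : ∀ j, v j (b j) = 1)
    (hzf : ∀ i j, i ≠ j → u i ⬝ᵥ H i j *ᵥ v j = 0) :
    Nat.card {ij : ι × ι // ij.2 ≠ ij.1} ≤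
      Nat.card {q : ι × m // q.2 ≠ a q.1} + Nat.card {q : ι × n // q.2 ≠ b q.1} := by
  rw [← Nat.card_sum]
  refine hH.natCard_le_of_mem_adjoin_compl_range
    (e := fun ij => (ij.1.1, ij.1.2, a ij.1.1, b ij.1.2)) ?_
    (Sum.elim (fun q => u q.1.1 q.1.2) (fun q => v q.1.1 q.1.2)) ?_
  · intro c c' h
    simp only [Prod.mk.injEq] at h
    exact Subtype.ext (Prod.ext h.1 h.2.1)
  rintro ⟨⟨i, j⟩, hji⟩
  refine Matrix.mem_of_dotProduct_mulVec_eq_zero (M := H i j)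
    (S := (Algebra.adjoin k _).toSubring) (hua i) (hvb j)
    (fun x => ?_) (fun y => ?_) (fun x y hxy => ?_) (hzf i j (Ne.symm hji))
  · by_cases hx : x = a i
    · rw [hx, hua]
      exact one_mem _
    · exact Algebra.subset_adjoin (Or.inr ⟨Sum.inl ⟨(i, x), hx⟩, rfl⟩)
  · by_cases hy : y = b j
    · rw [hy, hvb]
      exact one_mem _
    · exact Algebra.subset_adjoin (Or.inr ⟨Sum.inr ⟨(j, y), hy⟩, rfl⟩)
  · refine Algebra.subset_adjoin (Or.inl ⟨(i, j, x, y), fun hpivot => ?_, rfl⟩)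
    obtain ⟨c, hc⟩ := hpivot
    simp only [Prod.mk.injEq] at hc
    obtain ⟨rfl, rfl, rfl, rfl⟩ := hc
    exact hxy rfl

theorem IsZeroForcing.card_le (hH : AlgebraicIndependent k (channelEntries H))
    {u : ι → m → F} {v : ι → n → F} (hzf : IsZeroForcing H u v) :
    Fintype.card ι ≤ Fintype.card m + Fintype.card n - 1 := by
  choose a ha using fun i => Function.ne_iff.1 (hzf.ne_zero_left i)
  choose b hb using fun j => Function.ne_iff.1 (hzf.ne_zero_right j)
  have hcount := natCard_offDiag_le_of_dotProduct_mulVec_eq_zero hH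
    (u := fun i => (u i (a i))⁻¹ • u i) (v := fun j => (v j (b j))⁻¹ • v j)
    (fun i => inv_mul_cancel₀ (ha i)) (fun j => inv_mul_cancel₀ (hb j)) fun i j hij => by
      rw [mulVec_smul, smul_dotProduct, dotProduct_smul, hzf.dotProduct_mulVec_eq_zero i j hij,
        smul_zero, smul_zero]
  have hι : Nat.card {ij : ι × ι // ij.2 ≠ ij.1} + Nat.card ι = Nat.card ι * Nat.card ι :=
    Nat.card_subtype_snd_ne_add id
  have hm := Nat.card_subtype_snd_ne_add a
  have hn := Nat.card_subtype_snd_ne_add b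
  simp only [Nat.card_eq_fintype_card] at hcount hι hm hn
  have hmul : Fintype.card ι * (Fintype.card ι + 1) ≤
      Fintype.card ι * (Fintype.card m + Fintype.card n) := by
    simp only [mul_add, mul_one]
    omega
  rcases Nat.eq_zero_or_pos (Fintype.card ι) with h0 | hpos
  · omega
  · have := Nat.le_of_mul_le_mul_left hmul hpos
    omega

end ZeroForcing

namespace Filter.Germ

variable {α R A m n : Type*} {l : Filter α}

/-- Built from the existing `Module R (Germ l A)` instance, so that the two agree. -/
instance instAlgebra [CommSemiring R] [Semiring A] [Algebra R A] : Algebra R (Germ l A) :=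
  Algebra.ofModule
    (fun r x y => inductionOn₂ x y fun f g => by
      rw [← coe_smul, ← coe_mul, ← coe_mul, ← coe_smul, smul_mul_assoc])
    (fun r x y => inductionOn₂ x y fun f g => by
      rw [← coe_smul, ← coe_mul, ← coe_mul, ← coe_smul, mul_smul_comm])

def coeAlgHom [CommSemiring R] [Semiring A] [Algebra R A] (l : Filter α) :
    (α → A) →ₐ[R] Germ l A where
  __ := coeRingHom l
  commutes' r := by
    change ((algebraMap R (α → A) r : α → A) : Germ l A) = r • ((1 : α → A) : Germ l A)
    rw [← coe_smul, Algebra.algebraMap_eq_smul_one]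

theorem aeval_coe [CommSemiring R] [CommSemiring A] [Algebra R A] {σ : Type*} (c : α → σ → A)
    (p : MvPolynomial σ R) :
    aeval (fun i => ((fun x => c x i : α → A) : Germ l A)) p = ↑(fun x => aeval (c x) p) := by
  change aeval (fun i => coeAlgHom (R := R) l fun x => c x i) p = _
  rw [← comp_aeval, AlgHom.comp_apply]
  refine congrArg (fun f : α → A => (f : Germ l A)) (funext fun x => ?_)
  change Pi.evalAlgHom R (fun _ => A) x (aeval (fun i x => c x i) p) = _
  rw [← AlgHom.comp_apply, comp_aeval]
  rfl

theorem algebraicIndependent_coe [CommRing R] [NeBot l] {σ : Type*} (c : α → σ → R)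
    (hc : ∀ Q : MvPolynomial σ R, Q ≠ 0 → ∀ᶠ x in l, eval (c x) Q ≠ 0) :
    AlgebraicIndependent R (fun i => ((fun x => c x i : α → R) : Germ l R)) := by
  rw [algebraicIndependent_iff]
  intro Q hQ
  by_contra hne
  rw [aeval_coe, ← coe_zero, coe_eq] at hQ
  obtain ⟨x, hx0, hx⟩ := (hQ.and (hc Q hne)).exists
  exact hx (by simpa [coe_aeval_eq_eval] using hx0)

theorem pi_coe_ne_zero [Zero R] [Finite m] [NeBot l] {w : α → m → R}
    (h : ∀ᶠ x in l, w x ≠ 0) : (fun a => ((fun x => w x a : α → R) : Germ l R)) ≠ 0 := by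
  intro h0
  have hw : ∀ᶠ x in l, w x = 0 :=
    (eventually_all.2 fun a => coe_eq.1 (congrFun h0 a)).mono fun _ hx => funext hx
  obtain ⟨x, hx, hx0⟩ := (h.and hw).exists
  exact hx hx0

theorem pi_coe_dotProduct_mulVec [CommRing R] [Fintype m] [Fintype n] (u : α → m → R)
    (M : α → Matrix m n R) (w : α → n → R) :
    (fun a => ((fun x => u x a : α → R) : Germ l R)) ⬝ᵥ
        (of fun a b => ((fun x => M x a b : α → R) : Germ l R)) *ᵥ
          (fun b => ((fun x => w x b : α → R) : Germ l R)) =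
      ((fun x => u x ⬝ᵥ M x *ᵥ w x : α → R) : Germ l R) := by
  have hpt : (fun a x => u x a) ⬝ᵥ (of fun a b x => M x a b) *ᵥ (fun b x => w x b) =
      fun x => u x ⬝ᵥ M x *ᵥ w x := by
    ext x
    simp [dotProduct, mulVec, Finset.sum_apply]
  rw [← hpt]
  change _ = coeRingHom l _
  rw [RingHom.map_dotProduct]
  congr 1
  ext a
  exact (RingHom.map_mulVec (coeRingHom l) (of fun a b x => M x a b) _ a).symm

end Filter.Germ

theorem IsZeroForcing.germ {α R ι m n : Type*} [CommRing R] [Fintype m] [Fintype n]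
    {l : Filter α} [NeBot l] {H : α → ι → ι → Matrix m n R} {u : α → ι → m → R}
    {v : α → ι → n → R} (h : ∀ᶠ x in l, IsZeroForcing (H x) (u x) (v x)) :
    IsZeroForcing (fun i j => Matrix.of fun a b => ((fun x => H x i j a b : α → R) : Germ l R))
      (fun i a => ((fun x => u x i a : α → R) : Germ l R))
      (fun j b => ((fun x => v x j b : α → R) : Germ l R)) := by
  refine ⟨fun i => ?_, fun j => ?_, fun i j hij => ?_⟩
  · exact Germ.pi_coe_ne_zero (h.mono fun x hx => hx.ne_zero_left i)
  · exact Germ.pi_coe_ne_zero (h.mono fun x hx => hx.ne_zero_right j)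
  · rw [Germ.pi_coe_dotProduct_mulVec, ← Germ.coe_zero, Germ.coe_eq]
    exact h.mono fun x hx => hx.dotProduct_mulVec_eq_zero i j hij

theorem exists_ultrafilter_eventually_eval_ne_zero {k α σ : Type*} [CommRing k] [IsDomain k]
    (c : α → σ → k) (P : α → Prop)
    (h : ∀ Q : MvPolynomial σ k, Q ≠ 0 → ∃ x, eval (c x) Q ≠ 0 ∧ P x) :
    ∃ U : Ultrafilter α, (∀ᶠ x in U, P x) ∧
      ∀ Q : MvPolynomial σ k, Q ≠ 0 → ∀ᶠ x in U, eval (c x) Q ≠ 0 := by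
  set F := ⨅ Q : {Q : MvPolynomial σ k // Q ≠ 0}, 𝓟 {x | eval (c x) Q.1 ≠ 0 ∧ P x}
  have hF : ∀ Q : MvPolynomial σ k, Q ≠ 0 → ∀ᶠ x in F, eval (c x) Q ≠ 0 ∧ P x := fun Q hQ =>
    mem_iInf_of_mem ⟨Q, hQ⟩ (mem_principal_self _)
  have : NeBot F := by
    have : Nonempty {Q : MvPolynomial σ k // Q ≠ 0} := ⟨⟨1, one_ne_zero⟩⟩
    refine iInf_neBot_of_directed' (fun Q₁ Q₂ => ⟨⟨Q₁ * Q₂, mul_ne_zero Q₁.2 Q₂.2⟩, ?_, ?_⟩)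
      fun Q => principal_neBot_iff.2 (h Q.1 Q.2)
    all_goals
      refine principal_mono.2 fun x hx => ⟨fun h0 => hx.1 ?_, hx.2⟩
      simp [h0]
  refine ⟨Ultrafilter.of F, ?_, fun Q hQ => ?_⟩
  · exact Ultrafilter.of_le F ((hF 1 one_ne_zero).mono fun _ hx => hx.2)
  · exact Ultrafilter.of_le F ((hF Q hQ).mono fun _ hx => hx.1)

theorem IsZeroForcing.card_le_of_eventually {k α ι m n : Type*} [Field k] [Fintype ι]
    [Fintype m] [Fintype n] {U : Ultrafilter α} {H : α → ι → ι → Matrix m n k}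
    {u : α → ι → m → k} {v : α → ι → n → k}
    (hH : ∀ Q : MvPolynomial (ι × ι × m × n) k, Q ≠ 0 →
      ∀ᶠ x in U, eval (channelEntries (H x)) Q ≠ 0)
    (hzf : ∀ᶠ x in U, IsZeroForcing (H x) (u x) (v x)) :
    Fintype.card ι ≤ Fintype.card m + Fintype.card n - 1 := by
  have hind : AlgebraicIndependent k (channelEntries fun i j => of fun a b =>
      ((fun x => H x i j a b : α → k) : Germ (U : Filter α) k)) :=
    Germ.algebraicIndependent_coe (fun x => channelEntries (H x)) hH
  exact (IsZeroForcing.germ hzf).card_le hind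

/-- Constant MIMO IC, single beam: if for a generic (not contained in any proper
algebraic subset) set of channel matrices `H k j ∈ ℂ^{Mr×Mt}` there exist
nonzero beamformers `u k`, `v k` with `uₖᴴ H_{kj} v_j = 0` for all `k ≠ j`,
then `K ≤ Mr + Mt - 1`. -/
theorem stmt_5 (K Mr Mt : ℕ)
    (h : ∀ Q : MvPolynomial (Fin K × Fin K × Fin Mr × Fin Mt) ℂ, Q ≠ 0 →
      ∃ H : Fin K → Fin K → Matrix (Fin Mr) (Fin Mt) ℂ,
        MvPolynomial.eval (fun p => H p.1 p.2.1 p.2.2.1 p.2.2.2) Q ≠ 0 ∧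
        ∃ (u : Fin K → Fin Mr → ℂ) (v : Fin K → Fin Mt → ℂ),
          (∀ k, u k ≠ 0) ∧ (∀ k, v k ≠ 0) ∧
          ∀ k j, k ≠ j →
            dotProduct (star (u k)) (Matrix.mulVec (H k j) (v j)) = 0) :
    K ≤ Mr + Mt - 1 := by
  obtain ⟨U, hsol, hgen⟩ := exists_ultrafilter_eventually_eval_ne_zero channelEntries _ h
  obtain ⟨u, hu⟩ := hsol.choice
  obtain ⟨v, hv⟩ := hu.choice
  have hzf : ∀ᶠ H in ↑U, IsZeroForcing H (fun k => star (u H k)) (v H) :=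
    hv.mono fun H ⟨hu, hv, hzf⟩ => ⟨fun k => star_ne_zero.2 (hu k), hv, hzf⟩
  simpa using IsZeroForcing.card_le_of_eventually (H := fun H => H) hgen hzf
end

section
/- Lifting lemma (L = 2 case): Let A_1, A_2 be complex N_r-by-N matrices, and for 1 <= i, j <= K let H_{ij} = A_1 + tau_{ij} A_2 with tau_{ij} in C. If nonzero vectors v_1,...,v_K in C^N satisfy, for each k, that H_{kk} v_k is not in the span of {H_{kj} v_j : j != k}, then for each k the stacked vector (v_k; tau_{kk} v_k) in C^{2N} is not in the span of {(v_j; tau_{kj} v_j) : j != k}. -/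
/-! The map `(x; y) ↦ A₁ x + A₂ y` sends each stacked vector `(v_j; τ_{kj} v_j)` to `H_{kj} v_j`,
and a linear map carries a span membership to a span membership of the images. -/

open Matrix Set

section

variable {R m n : Type*} [CommSemiring R] [Fintype n]

def Matrix.stackMulVecLin (A₁ A₂ : Matrix m n R) : (n ⊕ n → R) →ₗ[R] m → R :=
  A₁.mulVecLin ∘ₗ LinearMap.funLeft R R Sum.inl + A₂.mulVecLin ∘ₗ LinearMap.funLeft R R Sum.inr

theorem Matrix.stackMulVecLin_sum_elim (A₁ A₂ : Matrix m n R) (x y : n → R) :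
    stackMulVecLin A₁ A₂ (Sum.elim x y) = A₁ *ᵥ x + A₂ *ᵥ y :=
  rfl

theorem Matrix.stackMulVecLin_sum_elim_smul (A₁ A₂ : Matrix m n R) (c : R) (x : n → R) :
    stackMulVecLin A₁ A₂ (Sum.elim x (c • x)) = (A₁ + c • A₂) *ᵥ x := by
  rw [stackMulVecLin_sum_elim, add_mulVec, smul_mulVec, mulVec_smul]

end

theorem Submodule.apply_mem_span_range_comp {R M M₂ ι : Type*} [Semiring R] [AddCommMonoid M]
    [AddCommMonoid M₂] [Module R M] [Module R M₂] (f : M →ₗ[R] M₂) {g : ι → M} {x : M}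
    (hx : x ∈ span R (range g)) : f x ∈ span R (range (f ∘ g)) := by
  simpa only [range_comp] using apply_mem_span_image_of_mem_span f hx

theorem stmt_9_general (K N Nr : ℕ) (A₁ A₂ : Matrix (Fin Nr) (Fin N) ℂ)
    (τ : Fin K → Fin K → ℂ) (H : Fin K → Fin K → Matrix (Fin Nr) (Fin N) ℂ)
    (hH : ∀ i j, H i j = A₁ + τ i j • A₂)
    (v : Fin K → Fin N → ℂ)
    (h : ∀ k, Matrix.mulVec (H k k) (v k) ∉
      Submodule.span ℂ (Set.range fun j : {j : Fin K // j ≠ k} =>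
        Matrix.mulVec (H k j.1) (v j.1))) :
    ∀ k, (Sum.elim (v k) (τ k k • v k) : Fin N ⊕ Fin N → ℂ) ∉
      Submodule.span ℂ (Set.range fun j : {j : Fin K // j ≠ k} =>
        (Sum.elim (v j.1) (τ k j.1 • v j.1) : Fin N ⊕ Fin N → ℂ)) := by
  intro k hk
  have hmem := Submodule.apply_mem_span_range_comp (stackMulVecLin A₁ A₂) hk
  simp only [Function.comp_def, stackMulVecLin_sum_elim_smul, ← hH] at hmem
  exact h k hmem

/-- Lifting lemma (`L = 2`): for channels `H i j = A₁ + τ i j • A₂`, if each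
`H k k *ᵥ v k` is outside the span of the interfering `H k j *ᵥ v j` (`j ≠ k`),
then each stacked vector `(v k ; τ k k • v k)` is outside the span of the
stacked vectors `(v j ; τ k j • v j)`, `j ≠ k`. -/
theorem stmt_9 (K N Nr : ℕ) (A₁ A₂ : Matrix (Fin Nr) (Fin N) ℂ)
    (τ : Fin K → Fin K → ℂ) (H : Fin K → Fin K → Matrix (Fin Nr) (Fin N) ℂ)
    (hH : ∀ i j, H i j = A₁ + τ i j • A₂)
    (v : Fin K → Fin N → ℂ) (hv : ∀ k, v k ≠ 0)
    (h : ∀ k, Matrix.mulVec (H k k) (v k) ∉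
      Submodule.span ℂ (Set.range fun j : {j : Fin K // j ≠ k} =>
        Matrix.mulVec (H k j.1) (v j.1))) :
    ∀ k, (Sum.elim (v k) (τ k k • v k) : Fin N ⊕ Fin N → ℂ) ∉
      Submodule.span ℂ (Set.range fun j : {j : Fin K // j ≠ k} =>
        (Sum.elim (v j.1) (τ k j.1 • v j.1) : Fin N ⊕ Fin N → ℂ)) :=
  stmt_9_general K N Nr A₁ A₂ τ H hH v h
end

section
/- Claim on maximal subspace dimension (general L): Suppose u_k^t = gamma_t * u_k^L for t = 1,...,L-1 with u_k^L in C^N nonzero, and for each j != k the equation sum_{l=1}^L tau_{kj}^l (u_k^l)^H v_j = 0 holds. Let Omega_k^c = {j != k : (u_k^L)^H v_j != 0}. If for every j in Omega_k^c the vector (tau_{kj}^1, ..., tau_{kj}^L) satisfies gamma_1^* tau_{kj}^1 + ... + gamma_{L-1}^* tau_{kj}^{L-1} + tau_{kj}^L = 0, and if the vectors (tau_{kj}^l)_{l=1..L}, j in Omega_k^c, are in general position (no L of them satisfy a common nontrivial linear relation with last coordinate 1 unless forced), then |Omega_k^c| <= L - 1, and hence K <= |Omega_k| + L where Omega_k is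 the complement of Omega_k^c in {1,...,K} \ {k}. -/
/-!
Every `τ j` with `j ∈ Ωᶜ` lies in the hyperplane `star γ ⬝ᵥ x = 0`, which is proper because the
last entry of `γ` is `1`. A linearly independent family inside a proper subspace of `ℂᴸ` has
fewer than `L` members, so general position leaves no room for `L` indices in `Ωᶜ`; the bound on
`K` is then counting `k`, `Ωᶜ` and `Ω_k`.
-/

open Module Submodule Matrix

theorem card_lt_of_linearIndependent_of_dotProduct_eq_zero {K ι β : Type*} [Field K]
    [Fintype ι] [Fintype β] {w : ι → K} (hw : w ≠ 0) {τ : β → ι → K}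
    (hτ : LinearIndependent K τ) (horth : ∀ j, w ⬝ᵥ τ j = 0) :
    Fintype.card β < Fintype.card ι := by
  classical
  let φ : (ι → K) →ₗ[K] K := dotProductBilin K K w
  have hspan : span K (Set.range τ) ≤ LinearMap.ker φ :=
    span_le.2 <| Set.range_subset_iff.2 horth
  have hker : LinearMap.ker φ ≠ ⊤ := by
    obtain ⟨i, hi⟩ := Function.ne_iff.1 hw
    intro htop
    have hmem : Pi.single i (1 : K) ∈ LinearMap.ker φ := htop ▸ mem_top
    simp only [φ, LinearMap.mem_ker, dotProductBilin_apply_apply, dotProduct_single, mul_one] at hmem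
    exact hi hmem
  calc Fintype.card β = finrank K (span K (Set.range τ)) := (finrank_span_eq_card hτ).symm
    _ ≤ finrank K (LinearMap.ker φ) := finrank_mono hspan
    _ < finrank K (ι → K) := finrank_lt hker
    _ = Fintype.card ι := finrank_fintype_fun_eq_card K

theorem Set.ncard_lt_of_forall_finset_subset_card_ne {α : Type*} {S : Set α} (hS : S.Finite)
    {n : ℕ} (h : ∀ s : Finset α, ↑s ⊆ S → s.card ≠ n) : S.ncard < n := by
  by_contra! hn
  rw [ncard_eq_toFinset_card S hS] at hn
  obtain ⟨t, hts, rfl⟩ := Finset.exists_subset_card_eq hn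
  exact h t (by simpa using hts) rfl

theorem card_le_ncard_setOf_ne_notMem_add {α : Type*} [Fintype α] (k : α) (S : Set α) :
    Fintype.card α ≤ {j | j ≠ k ∧ j ∉ S}.ncard + S.ncard + 1 := by
  have h : {j | j ≠ k ∧ j ∉ S} = Sᶜ \ {k} := by ext; simp [and_comm]
  have := Set.ncard_compl_add_ncard S
  have := Set.ncard_le_ncard_sdiff_add_ncard Sᶜ {k}
  rw [h, Set.ncard_singleton, Nat.card_eq_fintype_card] at *
  omega

theorem stmt_14 (K L : ℕ) (hL : 1 ≤ L) (k : Fin K)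
    (γ : Fin L → ℂ)
    (hγlast : γ ⟨L - 1, by omega⟩ = 1)
    (τ : Fin K → Fin L → ℂ)
    (Ωc : Set (Fin K))
    (horth : ∀ j ∈ Ωc, ∑ l, (starRingEnd ℂ) (γ l) * τ j l = 0)
    (hgp : ∀ s : Finset (Fin K), ↑s ⊆ Ωc → s.card = L →
      LinearIndependent ℂ (fun j : {x // x ∈ s} => τ j.1)) :
    Ωc.ncard ≤ L - 1 ∧ K ≤ {j : Fin K | j ≠ k ∧ j ∉ Ωc}.ncard + L := by
  have hγ : star γ ≠ 0 := fun h => by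
    simpa [hγlast] using congrFun h ⟨L - 1, by omega⟩
  have hΩc : Ωc.ncard < L := by
    refine Set.ncard_lt_of_forall_finset_subset_card_ne Ωc.toFinite fun s hs hcard => ?_
    have := card_lt_of_linearIndependent_of_dotProduct_eq_zero hγ (hgp s hs hcard)
      fun j => horth j (hs j.2)
    simp [hcard] at this
  have hcount := card_le_ncard_setOf_ne_notMem_add k Ωc
  rw [Fintype.card_fin] at hcount
  omega
end
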